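/- Let (A,⊛) be a complemented category with generator X such that the category of A-modules over a ring k is Noetherian, and let M be a finitely generated A-module. Then there exists N ≥ 0 such that T(M)_V = 0 for every object V of X-rank at least N, where T(M) is the torsion submodule of M. -/

import Mathlib

/-!
Complements make any two maps out of an object fit into a commutative square, so the elements
killed by some map form a subfunctor `T(M)`; by Noetherianity it is generated by finitely many
elements `x i`, each killed by a map into some rank `m i`. Complements also show that a map into
rank `m` factors every map out of the same object into rank at least `m`. Hence beyond rank
`max m i` every generator, and so all of `T(M)`, is sent to zero.
-/

open CategoryTheory CategoryTheory.Limits CategoryTheory.MonoidalCategory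

universe u v

variable {A : Type u} [Category.{v} A] [MonoidalCategory A]

/-- The canonical morphism `V ⟶ V ⊗ V'` coming from the fact that the monoidal
unit is initial. -/
def canL (hI : IsInitial (𝟙_ A)) (V V' : A) : V ⟶ V ⊗ V' :=
  (ρ_ V).inv ≫ (V ◁ hI.to V')

/-- The canonical morphism `V' ⟶ V ⊗ V'` coming from the fact that the monoidal
unit is initial. -/
def canR (hI : IsInitial (𝟙_ A)) (V V' : A) : V' ⟶ V ⊗ V' :=
  (λ_ V').inv ≫ (hI.to V ▷ V')

/-- `d : D ⟶ V` is a complement of the subobject `c : C ⟶ V`. -/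
def IsComplement (hI : IsInitial (𝟙_ A)) {C V D : A} (c : C ⟶ V) (d : D ⟶ V) : Prop :=
  ∃ φ : C ⊗ D ≅ V, canL hI C D ≫ φ.hom = c ∧ canR hI C D ≫ φ.hom = d

/-- A complemented category: a symmetric monoidal category in which every
morphism is a monomorphism, the monoidal unit is initial, morphisms out of a
tensor product are determined by their precompositions with the two canonical
morphisms, and every subobject has a complement, unique up to isomorphism. -/
structure ComplementedCategory (A : Type u) [Category.{v} A] [MonoidalCategory A]
    [SymmetricCategory A] : Prop where
  mono : ∀ {V W : A} (f : V ⟶ W), Mono f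
  unitInitial : Nonempty (IsInitial (𝟙_ A))
  hom_ext : ∀ (hI : IsInitial (𝟙_ A)) {V V' W : A} (f g : V ⊗ V' ⟶ W),
    canL hI V V' ≫ f = canL hI V V' ≫ g → canR hI V V' ≫ f = canR hI V V' ≫ g → f = g
  compl_exists : ∀ (hI : IsInitial (𝟙_ A)) {C V : A} (c : C ⟶ V),
    ∃ (D : A) (d : D ⟶ V), IsComplement hI c d
  compl_unique : ∀ (hI : IsInitial (𝟙_ A)) {C V D D' : A} (c : C ⟶ V)
    (d : D ⟶ V) (d' : D' ⟶ V), IsComplement hI c d → IsComplement hI c d' →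
    ∃ ψ : D ≅ D', ψ.hom ≫ d' = d

/-- Iterated tensor powers of an object. -/
def tpow (X : A) : ℕ → A
  | 0 => 𝟙_ A
  | n + 1 => tpow X n ⊗ X

/-- `X` is a generator: every object is isomorphic to a unique tensor power of
`X` (whose exponent is called the `X`-rank of the object). -/
def IsGen (X : A) : Prop :=
  ∀ V : A, ∃! i : ℕ, Nonempty (V ≅ tpow X i)

universe w

variable (k : Type w) [Ring k]

/-- A family of submodules of the values of a functor `M : A ⥤ Mod_k` forms a
subfunctor when it is preserved by all the maps of `M`. -/
def IsSubfunctor (M : A ⥤ ModuleCat.{w} k)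
    (N : ∀ c : A, Submodule k (M.obj c)) : Prop :=
  ∀ {c c' : A} (f : c ⟶ c') (x : M.obj c), x ∈ N c → M.map f x ∈ N c'

/-- An `A`-module (functor `A ⥤ Mod_k`) is finitely generated if finitely many
elements generate it: the only subfunctor containing them is the whole module. -/
def IsFinitelyGenerated (M : A ⥤ ModuleCat.{w} k) : Prop :=
  ∃ (n : ℕ) (c : Fin n → A) (x : ∀ i, M.obj (c i)),
    ∀ N : ∀ d : A, Submodule k (M.obj d), IsSubfunctor k M N →
      (∀ i, x i ∈ N (c i)) → ∀ d : A, N d = ⊤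

/-- A subfunctor is finitely generated if finitely many of its elements
generate it. -/
def SubfunctorFG (M : A ⥤ ModuleCat.{w} k)
    (N : ∀ c : A, Submodule k (M.obj c)) : Prop :=
  ∃ (n : ℕ) (c : Fin n → A) (x : ∀ i, M.obj (c i)),
    (∀ i, x i ∈ N (c i)) ∧
    ∀ N' : ∀ d : A, Submodule k (M.obj d), IsSubfunctor k M N' →
      (∀ d : A, N' d ≤ N d) → (∀ i, x i ∈ N' (c i)) → ∀ d : A, N' d = N d

/-- The category of `A`-modules over `k` is Noetherian: every subfunctor of a
finitely generated `A`-module is finitely generated. -/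
def ModulesNoetherian : Prop :=
  ∀ M : A ⥤ ModuleCat.{w} k, IsFinitelyGenerated k M →
    ∀ N : ∀ c : A, Submodule k (M.obj c), IsSubfunctor k M N →
      SubfunctorFG k M N

def tpowAdd (X : A) : ∀ a b : ℕ, tpow X a ⊗ tpow X b ≅ tpow X (a + b)
  | _, 0 => ρ_ _
  | a, b + 1 => (α_ _ _ _).symm ≪≫ whiskerRightIso (tpowAdd X a b) X

theorem nonempty_hom_tpow_of_le (hI : IsInitial (𝟙_ A)) (X : A) {a b : ℕ} (h : a ≤ b) :
    Nonempty (tpow X a ⟶ tpow X b) := by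
  induction b, h using Nat.le_induction with
  | base => exact ⟨𝟙 _⟩
  | succ b _ ih => exact ⟨ih.some ≫ canL hI (tpow X b) X⟩

theorem IsGen.rank_unique {X : A} (hX : IsGen X) {V : A} {i j : ℕ}
    (hi : Nonempty (V ≅ tpow X i)) (hj : Nonempty (V ≅ tpow X j)) : i = j :=
  (hX V).unique hi hj

theorem IsGen.rank_tensor {X : A} (hX : IsGen X) {C D V : A} (φ : C ⊗ D ≅ V) :
    ∃ e a : ℕ, Nonempty (C ≅ tpow X e) ∧ Nonempty (D ≅ tpow X a) ∧
      Nonempty (V ≅ tpow X (e + a)) := by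
  obtain ⟨e, ⟨ιC⟩, -⟩ := hX C
  obtain ⟨a, ⟨ιD⟩, -⟩ := hX D
  exact ⟨e, a, ⟨ιC⟩, ⟨ιD⟩, ⟨φ.symm ≪≫ tensorIso ιC ιD ≪≫ tpowAdd X e a⟩⟩

namespace ComplementedCategory

variable [SymmetricCategory A]

theorem exists_iso_canL (hA : ComplementedCategory A) (hI : IsInitial (𝟙_ A)) {C V : A}
    (c : C ⟶ V) :
    ∃ (D : A) (φ : C ⊗ D ≅ V), canL hI C D ≫ φ.hom = c := by
  obtain ⟨D, -, φ, hφ, -⟩ := hA.compl_exists hI c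
  exact ⟨D, φ, hφ⟩

/-- Amalgamation: with `V' ≅ V ⊗ D`, the square closes at `W ⊗ D`. -/
theorem exists_comm_square (hA : ComplementedCategory A) {V V' W : A} (g : V ⟶ V')
    (f : V ⟶ W) :
    ∃ (Z : A) (h : V' ⟶ Z) (h' : W ⟶ Z), g ≫ h = f ≫ h' := by
  obtain ⟨hI⟩ := hA.unitInitial
  obtain ⟨D, φ, hφ⟩ := hA.exists_iso_canL hI g
  refine ⟨W ⊗ D, φ.inv ≫ f ▷ D, canL hI W D, ?_⟩
  have hg : g ≫ φ.inv = canL hI V D := by simp [← hφ]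
  rw [← Category.assoc, hg, canL, canL, Category.assoc, whisker_exchange]
  simp

/-- Writing `W ≅ c ⊗ D` and `V ≅ c ⊗ D'`, additivity of rank gives `rank D ≤ rank D'`, hence a
morphism `D ⟶ D'`, and `c ◁ (D ⟶ D')` does the job. -/
theorem exists_factor_of_rank_le (hA : ComplementedCategory A) {X : A} (hX : IsGen X)
    {c W V : A} (f : c ⟶ W) (g : c ⟶ V) {m j : ℕ} (hW : Nonempty (W ≅ tpow X m))
    (hV : Nonempty (V ≅ tpow X j)) (hmj : m ≤ j) :
    ∃ h : W ⟶ V, f ≫ h = g := by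
  obtain ⟨hI⟩ := hA.unitInitial
  obtain ⟨D, φ, hφ⟩ := hA.exists_iso_canL hI f
  obtain ⟨D', φ', hφ'⟩ := hA.exists_iso_canL hI g
  obtain ⟨e, a, hc, ⟨ιD⟩, hW'⟩ := hX.rank_tensor φ
  obtain ⟨e', b, hc', ⟨ιD'⟩, hV'⟩ := hX.rank_tensor φ'
  have he : e = e' := hX.rank_unique hc hc'
  have hab : a ≤ b := by
    have := hX.rank_unique hW hW'
    have := hX.rank_unique hV hV'
    omega
  let u : D ⟶ D' := ιD.hom ≫ (nonempty_hom_tpow_of_le hI X hab).some ≫ ιD'.inv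
  refine ⟨φ.inv ≫ c ◁ u ≫ φ'.hom, ?_⟩
  have hf : f ≫ φ.inv = canL hI c D := by simp [← hφ]
  have hu : canL hI c D ≫ c ◁ u = canL hI c D' := by
    rw [canL, canL, Category.assoc, ← MonoidalCategory.whiskerLeft_comp, hI.hom_ext (_ ≫ u)]
  rw [← Category.assoc, hf, ← Category.assoc, hu, hφ']

end ComplementedCategory

section Torsion

variable {k} [SymmetricCategory A]

def torsion (hA : ComplementedCategory A) (M : A ⥤ ModuleCat.{w} k) (c : A) :
    Submodule k (M.obj c) where
  carrier := {x | ∃ (W : A) (f : c ⟶ W), M.map f x = 0}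
  zero_mem' := ⟨c, 𝟙 c, by simp⟩
  add_mem' := by
    rintro x y ⟨Wx, fx, hx⟩ ⟨Wy, fy, hy⟩
    obtain ⟨Z, h, h', hsq⟩ := hA.exists_comm_square fx fy
    refine ⟨Z, fx ≫ h, ?_⟩
    have hx' : M.map (fx ≫ h) x = 0 := by simp [hx]
    have hy' : M.map (fx ≫ h) y = 0 := by rw [hsq]; simp [hy]
    rw [map_add, hx', hy', add_zero]
  smul_mem' := by
    rintro r x ⟨W, f, hx⟩
    exact ⟨W, f, by simp [hx]⟩

theorem isSubfunctor_torsion (hA : ComplementedCategory A) (M : A ⥤ ModuleCat.{w} k) :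
    IsSubfunctor k M (torsion hA M) := by
  rintro c c' f x ⟨W, q, hq⟩
  obtain ⟨Z, h, h', hsq⟩ := hA.exists_comm_square f q
  refine ⟨Z, h, ?_⟩
  have : M.map (f ≫ h) x = 0 := by simp [hsq, hq]
  simpa using this

theorem map_eq_zero_of_rank_le (hA : ComplementedCategory A) {X : A} (hX : IsGen X)
    (M : A ⥤ ModuleCat.{w} k) {c W V : A} {x : M.obj c} (f : c ⟶ W) (hfx : M.map f x = 0)
    (g : c ⟶ V) {m j : ℕ} (hW : Nonempty (W ≅ tpow X m)) (hV : Nonempty (V ≅ tpow X j))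
    (hmj : m ≤ j) : M.map g x = 0 := by
  obtain ⟨h, rfl⟩ := hA.exists_factor_of_rank_le hX f g hW hV hmj
  simp [hfx]

end Torsion

section GeneratedSubfunctor

variable {k} {C : Type*} [Category C]

def spanSubfunctor (M : C ⥤ ModuleCat.{w} k) {n : ℕ} (c : Fin n → C) (x : ∀ i, M.obj (c i))
    (d : C) : Submodule k (M.obj d) :=
  Submodule.span k {y | ∃ (i : Fin n) (g : c i ⟶ d), y = M.map g (x i)}

variable (M : C ⥤ ModuleCat.{w} k) {n : ℕ} (c : Fin n → C) (x : ∀ i, M.obj (c i))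

theorem isSubfunctor_spanSubfunctor : IsSubfunctor k M (spanSubfunctor M c x) := by
  intro d d' g y hy
  induction hy using Submodule.span_induction with
  | mem z hz =>
    obtain ⟨i, q, rfl⟩ := hz
    exact Submodule.subset_span ⟨i, q ≫ g, by simp⟩
  | zero => simp
  | add a b _ _ ha hb => simpa using Submodule.add_mem _ ha hb
  | smul r a _ ha => simpa using Submodule.smul_mem _ r ha

theorem mem_spanSubfunctor (i : Fin n) : x i ∈ spanSubfunctor M c x (c i) :=
  Submodule.subset_span ⟨i, 𝟙 _, by simp⟩

theorem spanSubfunctor_le {N : ∀ d : C, Submodule k (M.obj d)} (hN : IsSubfunctor k M N)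
    (hx : ∀ i, x i ∈ N (c i)) (d : C) : spanSubfunctor M c x d ≤ N d :=
  Submodule.span_le.2 fun _ ⟨i, g, hy⟩ => hy ▸ hN g (x i) (hx i)

theorem SubfunctorFG.exists_eq_spanSubfunctor {N : ∀ d : C, Submodule k (M.obj d)}
    (hfg : SubfunctorFG k M N) (hN : IsSubfunctor k M N) :
    ∃ (n : ℕ) (c : Fin n → C) (x : ∀ i, M.obj (c i)),
      (∀ i, x i ∈ N (c i)) ∧ ∀ d, N d = spanSubfunctor M c x d := by
  obtain ⟨n, c, x, hx, hmin⟩ := hfg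
  refine ⟨n, c, x, hx, fun d => ?_⟩
  exact (hmin _ (isSubfunctor_spanSubfunctor M c x) (spanSubfunctor_le M c x hN hx)
    (mem_spanSubfunctor M c x) d).symm

end GeneratedSubfunctor

/-- If the category of `A`-modules over `k` is Noetherian and `M` is a finitely
generated `A`-module over the complemented category `A` with generator `X`,
then there is an `N` such that the torsion submodule of `M` vanishes on every
object of `X`-rank at least `N`. -/
theorem torsion_vanishes_in_large_rank [SymmetricCategory A]
    (hA : ComplementedCategory A) (X : A) (hX : IsGen X)
    (hNoeth : ModulesNoetherian (A := A) k)
    (M : A ⥤ ModuleCat.{w} k) (hM : IsFinitelyGenerated k M) :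
    ∃ N : ℕ, ∀ (V : A) (i : ℕ), N ≤ i → Nonempty (V ≅ tpow X i) →
      ∀ x : M.obj V, (∃ (W : A) (f : V ⟶ W), M.map f x = 0) → x = 0 := by
  have hT : IsSubfunctor k M (torsion hA M) := isSubfunctor_torsion hA M
  obtain ⟨n, c, x, hxT, hspan⟩ := (hNoeth M hM _ hT).exists_eq_spanSubfunctor M hT
  choose W f hf using hxT
  choose m hm using fun i => (hX (W i)).exists
  refine ⟨Finset.univ.sup m, fun V j hj hV y hy => ?_⟩
  have hbot : spanSubfunctor M c x V = ⊥ := by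
    refine Submodule.span_eq_bot.2 ?_
    rintro _ ⟨i, g, rfl⟩
    exact map_eq_zero_of_rank_le hA hX M (f i) (hf i) g (hm i) hV
      ((Finset.le_sup (Finset.mem_univ i)).trans hj)
  have hy' : y ∈ spanSubfunctor M c x V := hspan V ▸ hy
  simpa [hbot] using hy'
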